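/- The refined tableau calculus Rf(box, T_{K_m(¬)}⁺), obtained from T_{K_m(¬)}⁺ by replacing the rule (box) with the rule (□): T([r]p,x), T_R(r,x,y) / T(p,y), is sound and constructively complete for the logic K_m(¬): every fully expanded Rf(box, T_{K_m(¬)}⁺)-tableau for a satisfiable finite set of K_m(¬)-formulas has an open branch, and from every open branch B of a fully expanded Rf(box, T_{K_m(¬)}⁺)-tableau a K_m(¬)-model with domain the labels of B can be constructed in which every tableau formula of B is true. -/

import Mathlib

set_option autoImplicit false

namespace KmNotTableau

/-- Relation terms of the logic `K_m(¬)`: `α ::= a_1 | … | a_m | ¬α`. -/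
inductive RTerm (m : ℕ) : Type
  | atom : Fin m → RTerm m
  | neg : RTerm m → RTerm m

/-- Formulas of the logic `K_m(¬)`: `φ ::= p | ¬φ | φ∨φ | [α]φ`. -/
inductive Fm (m : ℕ) : Type
  | var : ℕ → Fm m
  | neg : Fm m → Fm m
  | or : Fm m → Fm m → Fm m
  | box : RTerm m → Fm m → Fm m

/-- A `K_m(¬)`-model `M = (W, (R_a)_a, V)` with `W` nonempty. -/
structure KModel (m : ℕ) where
  W : Type
  ne : Nonempty W
  R : Fin m → W → W → Prop
  V : ℕ → W → Prop

/-- Interpretation of relation terms: `R_{¬α} = (W×W) ∖ R_α`. -/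
def KModel.RT {m : ℕ} (M : KModel m) : RTerm m → M.W → M.W → Prop
  | .atom a => M.R a
  | .neg α => fun v w => ¬ M.RT α v w

/-- Satisfaction in a `K_m(¬)`-model. -/
def KModel.sat {m : ℕ} (M : KModel m) : M.W → Fm m → Prop
  | v, .var p => M.V p v
  | v, .neg φ => ¬ M.sat v φ
  | v, .or φ ψ => M.sat v φ ∨ M.sat v ψ
  | v, .box α φ => ∀ w, M.RT α v w → M.sat w φ

/-- A set of formulas is satisfiable if some model and world satisfy all its members. -/
def Satisfiable {m : ℕ} (N : Set (Fm m)) : Prop :=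
  ∃ (M : KModel m) (v : M.W), ∀ φ ∈ N, M.sat v φ

/-- Labels: terms generated from the initial constant `a₀` and Skolem terms `f(α,φ,t)`. -/
inductive Label (m : ℕ) : Type
  | a0 : Label m
  | sk : RTerm m → Fm m → Label m → Label m

/-- Tableau formulas: `T(φ,t)`, `F(φ,t)`, `T_R(α,t,t')`, `F_R(α,t,t')`. -/
inductive TabFm (m : ℕ) : Type
  | T : Fm m → Label m → TabFm m
  | F : Fm m → Label m → TabFm m
  | TR : RTerm m → Label m → Label m → TabFm m
  | FR : RTerm m → Label m → Label m → TabFm m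

/-- The labels occurring in a tableau formula. -/
def TabFm.labels {m : ℕ} : TabFm m → Set (Label m)
  | .T _ t => {t}
  | .F _ t => {t}
  | .TR _ t t' => {t, t'}
  | .FR _ t t' => {t, t'}

/-- The labels occurring in a set of tableau formulas (the initial label `a₀`,
introduced at the root, always counts as occurring). -/
def Lab {m : ℕ} (B : Set (TabFm m)) : Set (Label m) :=
  insert Label.a0 {t | ∃ f ∈ B, t ∈ f.labels}

/-- A calculus: `C s ds` holds if, on a branch whose set of formulas is `s`, some rule
of the calculus is applicable with denominator instances `ds` (a closure rule
application has `ds = []`). -/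
abbrev Calc (m : ℕ) := Set (TabFm m) → List (Set (TabFm m)) → Prop

/-- The root node `{T(φ,a₀) | φ ∈ N}` of a tableau for input `N`. -/
def initial {m : ℕ} (N : Set (Fm m)) : Set (TabFm m) :=
  {f | ∃ φ ∈ N, f = TabFm.T φ Label.a0}

/-- A tableau for input `N` in calculus `C`: a finitely branching tree of sets of tableau
formulas (nodes indexed by positions `List ℕ`, children of `p` being `p ++ [i]`), whose
root is `{T(φ,a₀) | φ ∈ N}`, and such that the children of every node are obtained by
applying a rule of `C`: each child adds one denominator instance to the node's set. -/
structure Tableau (m : ℕ) (C : Calc m) (N : Set (Fm m)) where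
  node : List ℕ → Option (Set (TabFm m))
  rootEq : node [] = some (initial N)
  tree : ∀ (p : List ℕ) (i : ℕ), node (p ++ [i]) ≠ none → node p ≠ none
  step : ∀ (p : List ℕ) (s : Set (TabFm m)), node p = some s →
    (∀ i : ℕ, node (p ++ [i]) = none) ∨
    (∃ ds, C s ds ∧ ∀ i : ℕ, node (p ++ [i]) = (ds[i]?).map (fun d => s ∪ d))

/-- A branch of a tableau: a maximal path from the root (represented by its
set of positions, a maximal chain under the prefix order). -/
structure Branch {m : ℕ} {C : Calc m} {N : Set (Fm m)} (Tb : Tableau m C N) where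
  pos : Set (List ℕ)
  inTree : ∀ p ∈ pos, Tb.node p ≠ none
  chain : ∀ p ∈ pos, ∀ q ∈ pos, p <+: q ∨ q <+: p
  downClosed : ∀ p ∈ pos, ∀ q : List ℕ, q <+: p → q ∈ pos
  maximal : ∀ q : List ℕ, Tb.node q ≠ none → (∀ p ∈ pos, p <+: q ∨ q <+: p) → q ∈ pos

/-- The set of tableau formulas occurring on a branch. -/
def Branch.fmls {m : ℕ} {C : Calc m} {N : Set (Fm m)} {Tb : Tableau m C N}
    (Br : Branch Tb) : Set (TabFm m) :=
  {f | ∃ p ∈ Br.pos, ∃ s, Tb.node p = some s ∧ f ∈ s}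

/-- A branch is open if no closure rule has been applied (is applicable) on it. -/
def Branch.IsOpen {m : ℕ} {C : Calc m} {N : Set (Fm m)} {Tb : Tableau m C N}
    (Br : Branch Tb) : Prop := ¬ C Br.fmls []

/-- A tableau is fully expanded if on every open branch every applicable rule has been
applied, i.e. some denominator instance of the rule is already contained in the branch. -/
def Tableau.Expanded {m : ℕ} {C : Calc m} {N : Set (Fm m)} (Tb : Tableau m C N) : Prop :=
  ∀ Br : Branch Tb, Br.IsOpen → ∀ ds, C Br.fmls ds → ∃ d ∈ ds, d ⊆ Br.fmls

/-- A `K_m(¬)`-model whose domain is (a set of) labels: the model `I(B)` constructed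
from a branch has domain the set of labels occurring in `B`. -/
structure LModel (m : ℕ) where
  R : Fin m → Label m → Label m → Prop
  V : ℕ → Label m → Prop

/-- Interpretation of relation terms in a label model: `R_{¬α}` is the complement. -/
def LModel.RT {m : ℕ} (M : LModel m) : RTerm m → Label m → Label m → Prop
  | .atom a => M.R a
  | .neg α => fun t t' => ¬ M.RT α t t'

/-- Satisfaction in a label model relativised to its domain `D`. -/
def LModel.sat {m : ℕ} (M : LModel m) (D : Set (Label m)) : Label m → Fm m → Prop
  | t, .var p => M.V p t
  | t, .neg φ => ¬ M.sat D t φ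
  | t, .or φ ψ => M.sat D t φ ∨ M.sat D t ψ
  | t, .box α φ => ∀ t' ∈ D, M.RT α t t' → M.sat D t' φ

/-- Every tableau formula of `B` is true in the model `M` with domain `Lab B`:
`T(φ,t) ∈ B` implies `φ` holds at `t`; `F(φ,t) ∈ B` implies `φ` fails at `t`;
`T_R(α,t,t') ∈ B` implies `(t,t') ∈ R_α`; `F_R(α,t,t') ∈ B` implies `(t,t') ∉ R_α`. -/
def Reflects {m : ℕ} (M : LModel m) (B : Set (TabFm m)) : Prop :=
  (∀ φ t, TabFm.T φ t ∈ B → M.sat (Lab B) t φ) ∧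
  (∀ φ t, TabFm.F φ t ∈ B → ¬ M.sat (Lab B) t φ) ∧
  (∀ α t t', TabFm.TR α t t' ∈ B → M.RT α t t') ∧
  (∀ α t t', TabFm.FR α t t' ∈ B → ¬ M.RT α t t')

/-- The calculus `T_{K_m(¬)}`. -/
def TKmNot (m : ℕ) : Calc m := fun s ds =>
  -- (¬⁺) T(¬p,x) / F(p,x)
  (∃ φ x, TabFm.T (.neg φ) x ∈ s ∧ ds = [{TabFm.F φ x}]) ∨
  -- (¬⁻) F(¬p,x) / T(p,x)
  (∃ φ x, TabFm.F (.neg φ) x ∈ s ∧ ds = [{TabFm.T φ x}]) ∨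
  -- (∨⁺) T(p∨q,x) / T(p,x) | T(q,x)
  (∃ φ ψ x, TabFm.T (.or φ ψ) x ∈ s ∧ ds = [{TabFm.T φ x}, {TabFm.T ψ x}]) ∨
  -- (∨⁻) F(p∨q,x) / F(p,x), F(q,x)
  (∃ φ ψ x, TabFm.F (.or φ ψ) x ∈ s ∧ ds = [{TabFm.F φ x, TabFm.F ψ x}]) ∨
  -- (box) T([r]p,x) / F_R(r,x,y) | T(p,y), for any label y occurring on the branch
  (∃ α φ x y, TabFm.T (.box α φ) x ∈ s ∧ y ∈ Lab s ∧
    ds = [{TabFm.FR α x y}, {TabFm.T φ y}]) ∨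
  -- (dia) F([r]p,x) / T_R(r,x,f(r,p,x)), F(p,f(r,p,x))
  (∃ α φ x, TabFm.F (.box α φ) x ∈ s ∧
    ds = [{TabFm.TR α x (Label.sk α φ x), TabFm.F φ (Label.sk α φ x)}]) ∨
  -- closure rules
  (∃ φ x, TabFm.T φ x ∈ s ∧ TabFm.F φ x ∈ s ∧ ds = []) ∨
  (∃ α x y, TabFm.TR α x y ∈ s ∧ TabFm.FR α x y ∈ s ∧ ds = []) ∨
  -- (¬R⁺) T_R(¬r,x,y) / F_R(r,x,y)
  (∃ α x y, TabFm.TR (.neg α) x y ∈ s ∧ ds = [{TabFm.FR α x y}]) ∨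
  -- (¬R⁻) F_R(¬r,x,y) / T_R(r,x,y)
  (∃ α x y, TabFm.FR (.neg α) x y ∈ s ∧ ds = [{TabFm.TR α x y}])

/-- The refined calculus `Rf(box, T_{K_m(¬)})`: `T_{K_m(¬)}` with the rule (box)
replaced by the rule (□): `T([r]p,x), T_R(r,x,y) / T(p,y)`. -/
def RfKmNot (m : ℕ) : Calc m := fun s ds =>
  (∃ φ x, TabFm.T (.neg φ) x ∈ s ∧ ds = [{TabFm.F φ x}]) ∨
  (∃ φ x, TabFm.F (.neg φ) x ∈ s ∧ ds = [{TabFm.T φ x}]) ∨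
  (∃ φ ψ x, TabFm.T (.or φ ψ) x ∈ s ∧ ds = [{TabFm.T φ x}, {TabFm.T ψ x}]) ∨
  (∃ φ ψ x, TabFm.F (.or φ ψ) x ∈ s ∧ ds = [{TabFm.F φ x, TabFm.F ψ x}]) ∨
  -- (□) T([r]p,x), T_R(r,x,y) / T(p,y)
  (∃ α φ x y, TabFm.T (.box α φ) x ∈ s ∧ TabFm.TR α x y ∈ s ∧ ds = [{TabFm.T φ y}]) ∨
  (∃ α φ x, TabFm.F (.box α φ) x ∈ s ∧
    ds = [{TabFm.TR α x (Label.sk α φ x), TabFm.F φ (Label.sk α φ x)}]) ∨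
  (∃ φ x, TabFm.T φ x ∈ s ∧ TabFm.F φ x ∈ s ∧ ds = []) ∨
  (∃ α x y, TabFm.TR α x y ∈ s ∧ TabFm.FR α x y ∈ s ∧ ds = []) ∨
  (∃ α x y, TabFm.TR (.neg α) x y ∈ s ∧ ds = [{TabFm.FR α x y}]) ∨
  (∃ α x y, TabFm.FR (.neg α) x y ∈ s ∧ ds = [{TabFm.TR α x y}])

/-- The refined calculus `Rf(box, T_{K_m(¬)}⁺)`: `T_{K_m(¬)}⁺` with the rule (box)
replaced by the rule (□): `T([r]p,x), T_R(r,x,y) / T(p,y)`; the rule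
(□¬): `T([¬r]p,x) / T_R(r,x,y) | T(p,y)` (for any label `y` on the branch) is kept. -/
def RfKmNotPlus (m : ℕ) : Calc m := fun s ds =>
  RfKmNot m s ds ∨
  -- (□¬) T([¬r]p,x) / T_R(r,x,y) | T(p,y), for any label y occurring on the branch
  (∃ α φ x y, TabFm.T (.box (.neg α) φ) x ∈ s ∧ y ∈ Lab s ∧
    ds = [{TabFm.TR α x y}, {TabFm.T φ y}])

/-! Soundness: from a model `M, v ⊨ N`, send `a₀` to `v` and every Skolem label `f(α,φ,x)` to a
witness of `M, ι x ⊭ [α]φ` when one exists. Every rule of the calculus then has a denominator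
that stays true under this assignment `ι`, so following true children gives a branch all of whose
formulas are true, and no closure rule can apply on it.

Completeness: an open, fully expanded branch `B` is a Hintikka set, and the model on labels with
`R_a = {(t,t') | T_R(a,t,t') ∈ B}` and `V(p) = {t | T(p,t) ∈ B}` makes every formula of `B` true,
by induction on relation terms and then on formulas. For `T([¬α]φ,x)` the rule (□) does not
help, since `R_{¬α}` is the complement of `R_α` and is not generated by `T_R` formulas; instead
(□¬) adds, for every label `y` of the branch, `T_R(α,x,y)` or `T(φ,y)`. -/

variable {m : ℕ}

section GreedyPath

variable {α : Type*} (G : List α → Prop)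

open Classical in
noncomputable def greedyStep (p : List α) : List α :=
  if h : ∃ i, G (p ++ [i]) then p ++ [h.choose] else p

noncomputable def greedyPath (n : ℕ) : List α := (greedyStep G)^[n] []

theorem greedyPath_succ (n : ℕ) : greedyPath G (n + 1) = greedyStep G (greedyPath G n) :=
  Function.iterate_succ_apply' _ _ _

theorem greedyPath_prefix_succ (n : ℕ) : greedyPath G n <+: greedyPath G (n + 1) := by
  rw [greedyPath_succ, greedyStep]
  split_ifs
  exacts [List.prefix_append _ _, List.prefix_refl _]

theorem greedyPath_mono {a b : ℕ} (hab : a ≤ b) : greedyPath G a <+: greedyPath G b := by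
  induction hab with
  | refl => exact List.prefix_refl _
  | step _ ih => exact ih.trans (greedyPath_prefix_succ G _)

theorem of_prefix_greedyPath (hroot : G []) {n : ℕ} {p : List α} (hp : p <+: greedyPath G n) :
    G p := by
  induction n generalizing p with
  | zero => rwa [List.prefix_nil.mp hp]
  | succ n ih =>
    rw [greedyPath_succ, greedyStep] at hp
    split_ifs at hp with h
    · rcases List.prefix_concat_iff.mp hp with rfl | hp
      exacts [h.choose_spec, ih hp]
    · exact ih hp

theorem exists_greedyPath_stuck {q : List α} (hq : ∀ n, greedyPath G n <+: q) :
    ∃ n, ∀ i, ¬ G (greedyPath G n ++ [i]) := by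
  by_contra! h
  have hlen : ∀ n, (greedyPath G n).length = n := by
    intro n
    induction n with
    | zero => rfl
    | succ n ih => simp [greedyPath_succ, greedyStep, dif_pos (h n), ih]
  have := (hq (q.length + 1)).length_le
  rw [hlen] at this
  omega

end GreedyPath

section Branches

variable {C : Calc m} {N : Set (Fm m)} (Tb : Tableau m C N)

theorem Tableau.node_ne_none_of_prefix {p q : List ℕ} (hpq : p <+: q) (hq : Tb.node q ≠ none) :
    Tb.node p ≠ none := by
  obtain ⟨r, rfl⟩ := hpq
  induction r using List.reverseRecOn with
  | nil => simpa using hq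
  | append_singleton r i ih => exact ih (Tb.tree _ i (by rwa [← List.append_assoc] at hq))

theorem Tableau.exists_branch_pos_subset (G : List ℕ → Prop) (hroot : G [])
    (hnode : ∀ p, G p → Tb.node p ≠ none)
    (hchild : ∀ p i, G p → Tb.node (p ++ [i]) ≠ none → ∃ j, G (p ++ [j])) :
    ∃ Br : Branch Tb, ∀ p ∈ Br.pos, G p := by
  let pos : Set (List ℕ) := {p | ∃ n, p <+: greedyPath G n}
  have hG : ∀ p ∈ pos, G p := fun p ⟨_, hp⟩ => of_prefix_greedyPath G hroot hp
  refine ⟨⟨pos, fun p hp => hnode p (hG p hp), ?chain, ?downClosed, ?maximal⟩, hG⟩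
  case chain =>
    rintro p ⟨a, hp⟩ q ⟨b, hq⟩
    rcases le_total a b with hab | hba
    · exact List.prefix_or_prefix_of_prefix (hp.trans (greedyPath_mono G hab)) hq
    · exact List.prefix_or_prefix_of_prefix hp (hq.trans (greedyPath_mono G hba))
  case downClosed => exact fun p ⟨n, hp⟩ q hqp => ⟨n, hqp.trans hp⟩
  case maximal =>
    intro q hq hcomp
    by_contra hqpos
    have hbelow : ∀ n, greedyPath G n <+: q := fun n =>
      (hcomp _ ⟨n, List.prefix_refl _⟩).resolve_right fun h => hqpos ⟨n, h⟩
    obtain ⟨n, hstuck⟩ := exists_greedyPath_stuck G hbelow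
    obtain ⟨_ | ⟨j, r⟩, hr⟩ := hbelow n
    · exact hqpos ⟨n, by simp [← hr]⟩
    · have hj : Tb.node (greedyPath G n ++ [j]) ≠ none :=
        Tb.node_ne_none_of_prefix ⟨r, by simpa using hr⟩ hq
      obtain ⟨k, hk⟩ := hchild _ j (hG _ ⟨n, List.prefix_refl _⟩) hj
      exact hstuck k hk

theorem Tableau.exists_branch_of_preserved (P : Set (TabFm m) → Prop) (hroot : P (initial N))
    (hpres : ∀ s ds, P s → C s ds → ∃ d ∈ ds, P (s ∪ d)) :
    ∃ Br : Branch Tb, ∀ p ∈ Br.pos, ∃ s, Tb.node p = some s ∧ P s := by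
  refine Tb.exists_branch_pos_subset _ ⟨_, Tb.rootEq, hroot⟩ (fun p ⟨s, hs, _⟩ => by simp [hs]) ?_
  rintro p i ⟨s, hs, hPs⟩ hi
  rcases Tb.step p s hs with hleaf | ⟨ds, hC, hchildren⟩
  · exact absurd (hleaf i) hi
  · obtain ⟨d, hd, hPd⟩ := hpres s ds hPs hC
    obtain ⟨j, hj, rfl⟩ := List.mem_iff_getElem.mp hd
    exact ⟨j, s ∪ ds[j], by simp [hchildren j, hj], hPd⟩

end Branches

section Soundness

variable (M : KModel m)

def TabFm.Holds (ι : Label m → M.W) : TabFm m → Prop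
  | .T φ t => M.sat (ι t) φ
  | .F φ t => ¬ M.sat (ι t) φ
  | .TR α t t' => M.RT α (ι t) (ι t')
  | .FR α t t' => ¬ M.RT α (ι t) (ι t')

def IsSkolemAssignment (ι : Label m → M.W) : Prop :=
  ∀ α φ x, ¬ M.sat (ι x) (.box α φ) →
    M.RT α (ι x) (ι (.sk α φ x)) ∧ ¬ M.sat (ι (.sk α φ x)) φ

noncomputable def skolemAssignment (v : M.W) : Label m → M.W
  | .a0 => v
  | .sk α φ x =>
    @Classical.epsilon _ M.ne fun w => M.RT α (skolemAssignment v x) w ∧ ¬ M.sat w φ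

theorem isSkolemAssignment_skolemAssignment (v : M.W) :
    IsSkolemAssignment M (skolemAssignment M v) := by
  intro α φ x h
  simp only [KModel.sat, not_forall] at h
  obtain ⟨w, hw, hφ⟩ := h
  exact Classical.epsilon_spec
    (p := fun w => M.RT α (skolemAssignment M v x) w ∧ ¬ M.sat w φ) ⟨w, hw, hφ⟩

variable {M}

theorem RfKmNotPlus.exists_holds {ι : Label m → M.W} (hι : IsSkolemAssignment M ι)
    {s : Set (TabFm m)} {ds : List (Set (TabFm m))} (hs : ∀ f ∈ s, f.Holds M ι)
    (h : RfKmNotPlus m s ds) : ∃ d ∈ ds, ∀ f ∈ d, f.Holds M ι := by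
  rcases h with (⟨φ, x, h, rfl⟩ | ⟨φ, x, h, rfl⟩ | ⟨φ, ψ, x, h, rfl⟩ | ⟨φ, ψ, x, h, rfl⟩ |
      ⟨α, φ, x, y, h, hR, rfl⟩ | ⟨α, φ, x, h, rfl⟩ | ⟨φ, x, hT, hF, rfl⟩ | ⟨α, x, y, hT, hF, rfl⟩ |
      ⟨α, x, y, h, rfl⟩ | ⟨α, x, y, h, rfl⟩) | ⟨α, φ, x, y, h, -, rfl⟩
  · simpa [TabFm.Holds, KModel.sat] using hs _ h
  · simpa [TabFm.Holds, KModel.sat] using hs _ h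
  · simpa [TabFm.Holds, KModel.sat] using hs _ h
  · simpa [TabFm.Holds, KModel.sat] using hs _ h
  · simpa [TabFm.Holds, KModel.sat] using hs _ h _ (hs _ hR)
  · simpa [TabFm.Holds] using hι α φ x (hs _ h)
  · exact absurd (hs _ hT) (hs _ hF)
  · exact absurd (hs _ hT) (hs _ hF)
  · simpa [TabFm.Holds, KModel.RT] using hs _ h
  · simpa [TabFm.Holds, KModel.RT] using hs _ h
  · by_cases hR : M.RT α (ι x) (ι y)
    · exact ⟨{.TR α x y}, by simp, by simpa [TabFm.Holds] using hR⟩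
    · exact ⟨{.T φ y}, by simp, by simpa [TabFm.Holds] using hs _ h (ι y) hR⟩

theorem Tableau.exists_isOpen_of_satisfiable {N : Set (Fm m)} (hN : Satisfiable N)
    (Tb : Tableau m (RfKmNotPlus m) N) : ∃ Br : Branch Tb, Br.IsOpen := by
  obtain ⟨M, v, hv⟩ := hN
  have hι := isSkolemAssignment_skolemAssignment M v
  obtain ⟨Br, hBr⟩ := Tb.exists_branch_of_preserved
    (fun s => ∀ f ∈ s, f.Holds M (skolemAssignment M v))
    (by rintro _ ⟨φ, hφ, rfl⟩; exact hv φ hφ)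
    (fun _ _ hs hC =>
      let ⟨d, hd, hdh⟩ := RfKmNotPlus.exists_holds hι hs hC
      ⟨d, hd, fun f hf => hf.elim (hs f) (hdh f)⟩)
  have hholds : ∀ f ∈ Br.fmls, f.Holds M (skolemAssignment M v) := by
    rintro f ⟨p, hp, s, hs, hf⟩
    obtain ⟨s', hs', hPs'⟩ := hBr p hp
    exact hPs' f (Option.some_injective _ (hs.symm.trans hs') ▸ hf)
  refine ⟨Br, fun hclosed => ?_⟩
  obtain ⟨d, hd, -⟩ := RfKmNotPlus.exists_holds hι hholds hclosed
  exact List.not_mem_nil hd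

end Soundness

section Completeness

structure IsHintikka (B : Set (TabFm m)) : Prop where
  not_F_of_T {φ x} : TabFm.T φ x ∈ B → TabFm.F φ x ∉ B
  not_FR_of_TR {α x y} : TabFm.TR α x y ∈ B → TabFm.FR α x y ∉ B
  F_of_T_neg {φ x} : TabFm.T (.neg φ) x ∈ B → TabFm.F φ x ∈ B
  T_of_F_neg {φ x} : TabFm.F (.neg φ) x ∈ B → TabFm.T φ x ∈ B
  T_or_T_of_T_or {φ ψ x} : TabFm.T (.or φ ψ) x ∈ B → TabFm.T φ x ∈ B ∨ TabFm.T ψ x ∈ B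
  F_and_F_of_F_or {φ ψ x} : TabFm.F (.or φ ψ) x ∈ B → TabFm.F φ x ∈ B ∧ TabFm.F ψ x ∈ B
  T_of_T_box {α φ x y} : TabFm.T (.box α φ) x ∈ B → TabFm.TR α x y ∈ B → TabFm.T φ y ∈ B
  TR_and_F_of_F_box {α φ x} : TabFm.F (.box α φ) x ∈ B →
    TabFm.TR α x (.sk α φ x) ∈ B ∧ TabFm.F φ (.sk α φ x) ∈ B
  FR_of_TR_neg {α x y} : TabFm.TR (.neg α) x y ∈ B → TabFm.FR α x y ∈ B
  TR_of_FR_neg {α x y} : TabFm.FR (.neg α) x y ∈ B → TabFm.TR α x y ∈ B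
  TR_or_T_of_T_box_neg {α φ x y} : TabFm.T (.box (.neg α) φ) x ∈ B → y ∈ Lab B →
    TabFm.TR α x y ∈ B ∨ TabFm.T φ y ∈ B

theorem isHintikka_of_expanded {B : Set (TabFm m)} (hopen : ¬ RfKmNotPlus m B [])
    (hexp : ∀ ds, RfKmNotPlus m B ds → ∃ d ∈ ds, d ⊆ B) : IsHintikka B := by
  have unary {d} (h : RfKmNotPlus m B [d]) : d ⊆ B := by simpa using hexp _ h
  have binary {d₁ d₂} (h : RfKmNotPlus m B [d₁, d₂]) : d₁ ⊆ B ∨ d₂ ⊆ B := by simpa using hexp _ h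
  refine
    { not_F_of_T := fun _ _ => hopen ?_
      not_FR_of_TR := fun _ _ => hopen ?_
      F_of_T_neg := fun _ => Set.singleton_subset_iff.1 (unary ?_)
      T_of_F_neg := fun _ => Set.singleton_subset_iff.1 (unary ?_)
      T_or_T_of_T_or := fun _ =>
        (binary ?_).imp Set.singleton_subset_iff.1 Set.singleton_subset_iff.1
      F_and_F_of_F_or := fun _ =>
        (Set.insert_subset_iff.1 (unary ?_)).imp_right Set.singleton_subset_iff.1
      T_of_T_box := fun _ _ => Set.singleton_subset_iff.1 (unary ?_)
      TR_and_F_of_F_box := fun _ =>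
        (Set.insert_subset_iff.1 (unary ?_)).imp_right Set.singleton_subset_iff.1
      FR_of_TR_neg := fun _ => Set.singleton_subset_iff.1 (unary ?_)
      TR_of_FR_neg := fun _ => Set.singleton_subset_iff.1 (unary ?_)
      TR_or_T_of_T_box_neg := fun _ _ =>
        (binary ?_).imp Set.singleton_subset_iff.1 Set.singleton_subset_iff.1 }
  all_goals unfold RfKmNotPlus RfKmNot; grind

def canonicalModel (B : Set (TabFm m)) : LModel m where
  R a t t' := TabFm.TR (.atom a) t t' ∈ B
  V p t := TabFm.T (.var p) t ∈ B

variable {B : Set (TabFm m)}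

theorem IsHintikka.rt (hB : IsHintikka B) (α : RTerm m) (t t' : Label m) :
    (TabFm.TR α t t' ∈ B → (canonicalModel B).RT α t t') ∧
      (TabFm.FR α t t' ∈ B → ¬ (canonicalModel B).RT α t t') := by
  induction α with
  | atom a => exact ⟨id, fun hF hT => hB.not_FR_of_TR hT hF⟩
  | neg α ih =>
    exact ⟨fun h => ih.2 (hB.FR_of_TR_neg h), fun h hn => hn (ih.1 (hB.TR_of_FR_neg h))⟩

theorem IsHintikka.sat (hB : IsHintikka B) (φ : Fm m) (t : Label m) :
    (TabFm.T φ t ∈ B → (canonicalModel B).sat (Lab B) t φ) ∧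
      (TabFm.F φ t ∈ B → ¬ (canonicalModel B).sat (Lab B) t φ) := by
  induction φ generalizing t with
  | var p => exact ⟨id, fun hF hT => hB.not_F_of_T hT hF⟩
  | neg φ ih =>
    exact ⟨fun h => (ih t).2 (hB.F_of_T_neg h), fun h hn => hn ((ih t).1 (hB.T_of_F_neg h))⟩
  | or φ ψ ihφ ihψ =>
    refine ⟨fun h => (hB.T_or_T_of_T_or h).imp (ihφ t).1 (ihψ t).1, fun h => ?_⟩
    obtain ⟨hφ, hψ⟩ := hB.F_and_F_of_F_or h
    exact not_or_intro ((ihφ t).2 hφ) ((ihψ t).2 hψ)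
  | box α φ ih =>
    constructor
    · intro h t' ht' hR
      cases α with
      | atom a => exact (ih t').1 (hB.T_of_T_box h hR)
      | neg α =>
        exact (hB.TR_or_T_of_T_box_neg h ht').elim
          (fun hTR => absurd ((hB.rt α t t').1 hTR) hR) (ih t').1
    · intro h hbox
      obtain ⟨hTR, hF⟩ := hB.TR_and_F_of_F_box h
      have hsk : Label.sk α φ t ∈ Lab B :=
        Set.mem_insert_of_mem _ ⟨_, hTR, by simp [TabFm.labels]⟩
      exact (ih _).2 hF (hbox _ hsk ((hB.rt α t _).1 hTR))

theorem IsHintikka.reflects (hB : IsHintikka B) : Reflects (canonicalModel B) B :=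
  ⟨fun φ t => (hB.sat φ t).1, fun φ t => (hB.sat φ t).2,
    fun α t t' => (hB.rt α t t').1, fun α t t' => (hB.rt α t t').2⟩

end Completeness

/-- The refined tableau calculus `Rf(box, T_{K_m(¬)}⁺)`, obtained from
`T_{K_m(¬)}⁺` by replacing the rule (box) with the rule (□): `T([r]p,x), T_R(r,x,y) /
T(p,y)`, is sound and constructively complete for the logic `K_m(¬)`: every fully
expanded `Rf(box, T_{K_m(¬)}⁺)`-tableau for a satisfiable finite set of
`K_m(¬)`-formulas has an open branch, and from every open branch `B` of a fully expanded
`Rf(box, T_{K_m(¬)}⁺)`-tableau a `K_m(¬)`-model with domain the labels of `B` can be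
constructed in which every tableau formula of `B` is true. -/
theorem RfKmNotPlus_sound_and_constructively_complete (m : ℕ) :
    (∀ N : Set (Fm m), N.Finite → Satisfiable N →
      ∀ Tb : Tableau m (RfKmNotPlus m) N, Tb.Expanded → ∃ Br : Branch Tb, Br.IsOpen) ∧
    (∀ (N : Set (Fm m)) (Tb : Tableau m (RfKmNotPlus m) N), Tb.Expanded →
      ∀ Br : Branch Tb, Br.IsOpen → ∃ M : LModel m, Reflects M Br.fmls) :=
  ⟨fun _ _ hN Tb _ => Tb.exists_isOpen_of_satisfiable hN,
    fun _ _ hexp Br hopen => ⟨_, (isHintikka_of_expanded hopen (hexp Br hopen)).reflects⟩⟩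

end KmNotTableau
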